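/- arXiv:1201.2872 — 7 statements merged into one kernel-verified Lean document; each statement's English description precedes it below -/
import Mathlib

section
/- Let n ≥ 1 and let u : ℝⁿ → ℝ be a C² function with u(x) ≥ 0 for all x, satisfying the elliptic differential inequality Δu ≥ (2/n)·u² everywhere on ℝⁿ (where Δ is the Euclidean Laplacian). Then u is identically zero. -/
/-- The Euclidean Laplacian of `u : ℝⁿ → ℝ`, i.e. the trace of the Hessian,
computed as the sum of the pure second directional derivatives along the
standard orthonormal basis. -/
noncomputable def laplacian {n : ℕ} (u : EuclideanSpace ℝ (Fin n) → ℝ)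
    (x : EuclideanSpace ℝ (Fin n)) : ℝ :=
  ∑ i : Fin n,
    fderiv ℝ (fun y => fderiv ℝ u y (EuclideanSpace.single i 1)) x
      (EuclideanSpace.single i 1)

/-!
Osserman's barrier argument. On the ball `B(x₀, R)` the function
`v(z) = a / (R² - |z - x₀|²)²` with `a = 4(n + 6)R² / c` satisfies `Δv ≤ c v²` and blows up at the
boundary. If `c u² ≤ Δu`, then at an interior maximum of `u - v` where `u > v` we would get
`Δu ≤ Δv ≤ c v² < c u² ≤ Δu`; hence `u ≤ v` and in particular `u(x₀) ≤ v(x₀) = 4(n + 6) / (c R²)`.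
Letting `R → ∞` gives `u ≤ 0`.
-/

open Filter Metric Set Topology

theorem IsLocalMax.deriv_deriv_nonpos {f : ℝ → ℝ} {a : ℝ} (h : IsLocalMax f a)
    (hc : ContinuousAt f a) : deriv (deriv f) a ≤ 0 := by
  by_contra! hpos
  -- The second derivative test would make `a` a local minimum as well, so `f` is locally constant.
  have hmin : IsLocalMin f a := isLocalMin_of_deriv_deriv_pos hpos h.deriv_eq_zero hc
  have hconst : f =ᶠ[𝓝 a] fun _ => f a := by
    filter_upwards [h, hmin] with x hmax hmin using le_antisymm hmax hmin
  exact hpos.ne' (by rw [hconst.deriv.deriv_eq]; simp)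

section SecondDerivative

variable {E : Type*} [NormedAddCommGroup E] [NormedSpace ℝ E] {f : E → ℝ} {x : E}

theorem ContDiffAt.eventually_differentiableAt (hf : ContDiffAt ℝ 2 f x) :
    ∀ᶠ y in 𝓝 x, DifferentiableAt ℝ f y :=
  (hf.eventually (by simp)).mono fun _ hy => hy.differentiableAt two_ne_zero

theorem ContDiffAt.differentiableAt_fderiv_apply (hf : ContDiffAt ℝ 2 f x) (e : E) :
    DifferentiableAt ℝ (fun y => fderiv ℝ f y e) x :=
  ((hf.fderiv_right (m := 1) le_rfl).differentiableAt one_ne_zero).clm_apply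
    (differentiableAt_const e)

theorem IsLocalMax.fderiv_fderiv_apply_nonpos (h : IsLocalMax f x) (hf : ContDiffAt ℝ 2 f x)
    (e : E) : fderiv ℝ (fun y => fderiv ℝ f y e) x e ≤ 0 := by
  have hline : ∀ t : ℝ, HasDerivAt (fun t : ℝ => x + t • e) e t := fun t => by
    simpa using ((hasDerivAt_id t).smul_const e).const_add x
  have hline_cont : ContinuousAt (fun t : ℝ => x + t • e) 0 := (hline 0).continuousAt
  have hmax : IsLocalMax (fun t : ℝ => f (x + t • e)) 0 :=
    IsLocalMax.comp_continuous (by simpa using h) hline_cont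
  have hderiv : deriv (fun t : ℝ => f (x + t • e)) =ᶠ[𝓝 0]
      fun t => fderiv ℝ f (x + t • e) e := by
    filter_upwards [hline_cont.eventually (by simpa using hf.eventually_differentiableAt)]
      with t ht
    exact (ht.hasFDerivAt.comp_hasDerivAt t (hline t)).deriv
  have hsecond : deriv (deriv fun t : ℝ => f (x + t • e)) 0
      = fderiv ℝ (fun y => fderiv ℝ f y e) x e := by
    rw [hderiv.deriv_eq]
    exact ((hf.differentiableAt_fderiv_apply e).hasFDerivAt.comp_hasDerivAt_of_eq 0 (hline 0)
      (by simp)).deriv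
  rw [← hsecond]
  exact hmax.deriv_deriv_nonpos (hf.continuousAt.comp_of_eq hline_cont (by simp))

end SecondDerivative

theorem hasFDerivAt_norm_sub_sq {F : Type*} [NormedAddCommGroup F] [InnerProductSpace ℝ F]
    (x₀ y : F) : HasFDerivAt (fun y => ‖y - x₀‖ ^ 2) (2 • innerSL ℝ (y - x₀)) y := by
  simpa using ((hasFDerivAt_id y).sub_const x₀).norm_sq

theorem hasDerivAt_div_sub_pow (a b : ℝ) (k : ℕ) {t : ℝ} (ht : t ≠ b) :
    HasDerivAt (fun t => a / (b - t) ^ k) (k * a / (b - t) ^ (k + 1)) t := by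
  have hb : b - t ≠ 0 := sub_ne_zero.2 ht.symm
  refine ((hasDerivAt_const t a).div (((hasDerivAt_id' t).const_sub b).pow k)
    (pow_ne_zero k hb)).congr_deriv ?_
  rcases k with _ | k
  · simp
  · simp only [Pi.pow_apply, Nat.add_sub_cancel]
    field_simp
    push_cast
    ring

section Laplacian

variable {n : ℕ} {u v : EuclideanSpace ℝ (Fin n) → ℝ} {x x₀ : EuclideanSpace ℝ (Fin n)}

theorem laplacian_sub (hu : ContDiffAt ℝ 2 u x) (hv : ContDiffAt ℝ 2 v x) :
    laplacian (u - v) x = laplacian u x - laplacian v x := by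
  rw [laplacian, laplacian, laplacian, ← Finset.sum_sub_distrib]
  refine Finset.sum_congr rfl fun i _ => ?_
  set e : EuclideanSpace ℝ (Fin n) := EuclideanSpace.single i 1
  have hfderiv : (fun y => fderiv ℝ (u - v) y e) =ᶠ[𝓝 x]
      fun y => fderiv ℝ u y e - fderiv ℝ v y e := by
    filter_upwards [hu.eventually_differentiableAt, hv.eventually_differentiableAt]
      with y hu hv
    rw [fderiv_sub hu hv, sub_apply]
  rw [hfderiv.fderiv_eq, fderiv_fun_sub (hu.differentiableAt_fderiv_apply e)
    (hv.differentiableAt_fderiv_apply e), sub_apply]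

theorem IsLocalMax.laplacian_nonpos (h : IsLocalMax u x) (hu : ContDiffAt ℝ 2 u x) :
    laplacian u x ≤ 0 :=
  Finset.sum_nonpos fun _ _ => h.fderiv_fderiv_apply_nonpos hu _

theorem laplacian_comp_norm_sub_sq {φ φ' : ℝ → ℝ} {φ'' : ℝ}
    (hφ : ∀ᶠ t in 𝓝 (‖x - x₀‖ ^ 2), HasDerivAt φ (φ' t) t)
    (hφ' : HasDerivAt φ' φ'' (‖x - x₀‖ ^ 2)) :
    laplacian (fun y => φ (‖y - x₀‖ ^ 2)) x
      = 4 * ‖x - x₀‖ ^ 2 * φ'' + 2 * n * φ' (‖x - x₀‖ ^ 2) := by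
  have hφ_near : ∀ᶠ y in 𝓝 x, HasDerivAt φ (φ' (‖y - x₀‖ ^ 2)) (‖y - x₀‖ ^ 2) :=
    (hasFDerivAt_norm_sub_sq x₀ x).continuousAt.eventually hφ
  have hdir : ∀ i, fderiv ℝ (fun y => fderiv ℝ (fun y => φ (‖y - x₀‖ ^ 2)) y
      (EuclideanSpace.single i 1)) x (EuclideanSpace.single i 1)
      = 4 * φ'' * (x i - x₀ i) ^ 2 + 2 * φ' (‖x - x₀‖ ^ 2) := by
    intro i
    have hfirst : (fun y => fderiv ℝ (fun y => φ (‖y - x₀‖ ^ 2)) y (EuclideanSpace.single i 1))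
        =ᶠ[𝓝 x] fun y => φ' (‖y - x₀‖ ^ 2) * (2 * (y i - x₀ i)) := by
      filter_upwards [hφ_near] with y hy
      rw [HasFDerivAt.fderiv (f := fun y => φ (‖y - x₀‖ ^ 2))
        (hy.comp_hasFDerivAt y (hasFDerivAt_norm_sub_sq x₀ y))]
      simp [EuclideanSpace.inner_single_right]
    have hcoord : HasFDerivAt (fun y : EuclideanSpace ℝ (Fin n) => 2 * (y i - x₀ i))
        ((2 : ℝ) • EuclideanSpace.proj (𝕜 := ℝ) i) x := by
      simpa using
        (((EuclideanSpace.proj (𝕜 := ℝ) i).hasFDerivAt (x := x)).sub_const (x₀ i)).const_mul 2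
    rw [hfirst.fderiv_eq,
      HasFDerivAt.fderiv (f := fun y => φ' (‖y - x₀‖ ^ 2) * (2 * (y i - x₀ i)))
        ((hφ'.comp_hasFDerivAt x (hasFDerivAt_norm_sub_sq x₀ x)).mul hcoord)]
    simp [EuclideanSpace.inner_single_right]
    ring
  rw [laplacian, Finset.sum_congr rfl fun i _ => hdir i, Finset.sum_add_distrib,
    ← Finset.mul_sum, EuclideanSpace.real_norm_sq_eq (x - x₀)]
  simp
  ring

theorem le_on_closedBall_of_le_on_sphere {r : ℝ}
    (hu : ContinuousOn u (closedBall x₀ r)) (hv : ContinuousOn v (closedBall x₀ r))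
    (hu₂ : ∀ z ∈ ball x₀ r, ContDiffAt ℝ 2 u z) (hv₂ : ∀ z ∈ ball x₀ r, ContDiffAt ℝ 2 v z)
    (hsphere : ∀ z ∈ sphere x₀ r, u z ≤ v z)
    (hlap : ∀ z ∈ ball x₀ r, v z < u z → laplacian v z < laplacian u z) :
    ∀ z ∈ closedBall x₀ r, u z ≤ v z := by
  intro z hz
  by_contra! hlt
  obtain ⟨x₁, hx₁, hmax⟩ := (isCompact_closedBall x₀ r).exists_isMaxOn ⟨z, hz⟩ (hu.sub hv)
  have hpos : v x₁ < u x₁ := by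
    have := isMaxOn_iff.1 hmax z hz
    simp only [Pi.sub_apply] at this
    linarith
  have hx₁_ball : x₁ ∈ ball x₀ r := by
    rcases (mem_closedBall.1 hx₁).lt_or_eq with hlt | heq
    · exact hlt
    · exact absurd (hsphere x₁ heq) (not_le.2 hpos)
  have hlocal : IsLocalMax (u - v) x₁ :=
    hmax.isLocalMax (mem_of_superset (isOpen_ball.mem_nhds hx₁_ball) ball_subset_closedBall)
  have := hlocal.laplacian_nonpos ((hu₂ x₁ hx₁_ball).sub (hv₂ x₁ hx₁_ball))
  rw [laplacian_sub (hu₂ x₁ hx₁_ball) (hv₂ x₁ hx₁_ball)] at this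
  linarith [hlap x₁ hx₁_ball hpos]

end Laplacian

section Barrier

variable {n : ℕ} (x₀ : EuclideanSpace ℝ (Fin n)) (R a : ℝ)

noncomputable def blowUpBarrier (z : EuclideanSpace ℝ (Fin n)) : ℝ :=
  a / (R ^ 2 - ‖z - x₀‖ ^ 2) ^ 2

variable {x₀ R a} {z : EuclideanSpace ℝ (Fin n)}

theorem blowUpBarrier_center : blowUpBarrier x₀ R a x₀ = a / R ^ 4 := by
  simp [blowUpBarrier, ← pow_mul]

theorem sub_norm_sq_pos_of_mem_ball (hz : z ∈ ball x₀ R) : 0 < R ^ 2 - ‖z - x₀‖ ^ 2 := by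
  rw [mem_ball, dist_eq_norm] at hz
  nlinarith [norm_nonneg (z - x₀)]

theorem contDiffAt_blowUpBarrier (hz : z ∈ ball x₀ R) :
    ContDiffAt ℝ 2 (blowUpBarrier x₀ R a) z :=
  contDiffAt_const.div ((contDiffAt_const.sub
    ((contDiff_norm_sq ℝ).contDiffAt.comp z (contDiffAt_id.sub contDiffAt_const))).pow 2)
    (pow_pos (sub_norm_sq_pos_of_mem_ball hz) 2).ne'

theorem laplacian_blowUpBarrier (hz : z ∈ ball x₀ R) :
    laplacian (blowUpBarrier x₀ R a) z
      = 24 * a * ‖z - x₀‖ ^ 2 / (R ^ 2 - ‖z - x₀‖ ^ 2) ^ 4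
        + 4 * n * a / (R ^ 2 - ‖z - x₀‖ ^ 2) ^ 3 := by
  have hne : ‖z - x₀‖ ^ 2 ≠ R ^ 2 := (sub_pos.1 (sub_norm_sq_pos_of_mem_ball hz)).ne
  have hφ : ∀ᶠ t in 𝓝 (‖z - x₀‖ ^ 2),
      HasDerivAt (fun t => a / (R ^ 2 - t) ^ 2) ((2 : ℕ) * a / (R ^ 2 - t) ^ (2 + 1)) t := by
    filter_upwards [isOpen_ne.mem_nhds hne] with t ht
    exact hasDerivAt_div_sub_pow a (R ^ 2) 2 ht
  unfold blowUpBarrier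
  rw [laplacian_comp_norm_sub_sq hφ (hasDerivAt_div_sub_pow _ (R ^ 2) 3 hne)]
  push_cast
  ring

theorem laplacian_blowUpBarrier_le {c : ℝ} (hc : 0 < c) (ha : 4 * (n + 6) * R ^ 2 ≤ c * a)
    (hz : z ∈ ball x₀ R) :
    laplacian (blowUpBarrier x₀ R a) z ≤ c * blowUpBarrier x₀ R a z ^ 2 := by
  have hs : 0 < R ^ 2 - ‖z - x₀‖ ^ 2 := sub_norm_sq_pos_of_mem_ball hz
  rw [laplacian_blowUpBarrier hz, blowUpBarrier]
  set ρ := ‖z - x₀‖ ^ 2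
  set s := R ^ 2 - ρ
  have hρ : 0 ≤ ρ := by positivity
  have ha₀ : 0 ≤ a := by nlinarith
  have hkey : 24 * a * ρ + 4 * n * a * s ≤ c * a ^ 2 := by
    have : 4 * (n + 6) * (ρ + s) * a ≤ c * a * a := by
      simpa [s] using mul_le_mul_of_nonneg_right ha ha₀
    nlinarith [mul_nonneg ha₀ hρ, mul_nonneg ha₀ hs.le, (Nat.cast_nonneg n : (0 : ℝ) ≤ n)]
  calc 24 * a * ρ / s ^ 4 + 4 * n * a / s ^ 3
      = (24 * a * ρ + 4 * n * a * s) / s ^ 4 := by field_simp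
    _ ≤ c * a ^ 2 / s ^ 4 := by gcongr
    _ = c * (a / s ^ 2) ^ 2 := by field_simp

theorem exists_le_blowUpBarrier_on_sphere (hR : 0 < R) (ha : 0 < a) (M : ℝ) :
    ∃ r ∈ Ioo 0 R, ∀ z ∈ sphere x₀ r, M ≤ blowUpBarrier x₀ R a z := by
  have hgap : Tendsto (fun r => (R ^ 2 - r ^ 2) ^ 2) (𝓝[<] R) (𝓝[>] 0) := by
    refine tendsto_nhdsWithin_iff.2 ⟨?_, ?_⟩
    · have : Continuous fun r : ℝ => (R ^ 2 - r ^ 2) ^ 2 := by fun_prop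
      simpa using (this.tendsto R).mono_left nhdsWithin_le_nhds
    · filter_upwards [Ioo_mem_nhdsLT hR] with r hr
      have : 0 < R ^ 2 - r ^ 2 := by nlinarith [hr.1, hr.2]
      exact pow_pos this 2
  have hblow : Tendsto (fun r => a / (R ^ 2 - r ^ 2) ^ 2) (𝓝[<] R) atTop := by
    simpa [div_eq_mul_inv] using hgap.inv_tendsto_nhdsGT_zero.const_mul_atTop ha
  obtain ⟨r, hM, hr⟩ := ((hblow.eventually_ge_atTop M).and (Ioo_mem_nhdsLT hR)).exists
  refine ⟨r, hr, fun z hz => ?_⟩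
  rwa [blowUpBarrier, ← dist_eq_norm, mem_sphere.1 hz]

end Barrier

theorem le_div_sq_of_mul_sq_le_laplacian {n : ℕ} {u : EuclideanSpace ℝ (Fin n) → ℝ}
    {x₀ : EuclideanSpace ℝ (Fin n)} {c R : ℝ} (hc : 0 < c) (hR : 0 < R)
    (hu : ContDiffOn ℝ 2 u (closedBall x₀ R))
    (hineq : ∀ x ∈ ball x₀ R, c * u x ^ 2 ≤ laplacian u x) :
    u x₀ ≤ 4 * (n + 6) / (c * R ^ 2) := by
  set a := 4 * (n + 6) * R ^ 2 / c
  have ha : 0 < a := by positivity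
  have hca : c * a = 4 * (n + 6) * R ^ 2 := mul_div_cancel₀ _ hc.ne'
  obtain ⟨M, hM⟩ := (isCompact_closedBall x₀ R).bddAbove_image hu.continuousOn
  obtain ⟨r, ⟨hr₀, hrR⟩, hsphere⟩ := exists_le_blowUpBarrier_on_sphere (x₀ := x₀) hR ha M
  have hsub : closedBall x₀ r ⊆ ball x₀ R := closedBall_subset_ball hrR
  have hu₂ : ∀ z ∈ ball x₀ R, ContDiffAt ℝ 2 u z := fun z hz =>
    hu.contDiffAt (mem_of_superset (isOpen_ball.mem_nhds hz) ball_subset_closedBall)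
  have hu_sphere : ∀ z ∈ sphere x₀ r, u z ≤ blowUpBarrier x₀ R a z := fun z hz =>
    (mem_upperBounds.1 hM _ (mem_image_of_mem u
      (ball_subset_closedBall (hsub (sphere_subset_closedBall hz))))).trans (hsphere z hz)
  have hlap : ∀ z ∈ ball x₀ r, blowUpBarrier x₀ R a z < u z →
      laplacian (blowUpBarrier x₀ R a) z < laplacian u z := fun z hz hvu => by
    have hzR := hsub (ball_subset_closedBall hz)
    have hv₀ : 0 ≤ blowUpBarrier x₀ R a z := div_nonneg ha.le (sq_nonneg _)
    calc laplacian (blowUpBarrier x₀ R a) z ≤ c * blowUpBarrier x₀ R a z ^ 2 :=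
          laplacian_blowUpBarrier_le hc hca.ge hzR
      _ < c * u z ^ 2 := by gcongr
      _ ≤ laplacian u z := hineq z hzR
  calc u x₀ ≤ blowUpBarrier x₀ R a x₀ :=
        le_on_closedBall_of_le_on_sphere (hu.continuousOn.mono (hsub.trans ball_subset_closedBall))
          (fun z hz => (contDiffAt_blowUpBarrier (hsub hz)).continuousAt.continuousWithinAt)
          (fun z hz => hu₂ z (hsub (ball_subset_closedBall hz)))
          (fun z hz => contDiffAt_blowUpBarrier (hsub (ball_subset_closedBall hz)))
          hu_sphere hlap x₀ (mem_closedBall_self hr₀.le)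
    _ = 4 * (n + 6) / (c * R ^ 2) := by
      rw [blowUpBarrier_center]
      field_simp
      linarith

/-- Let `n ≥ 1` and let `u : ℝⁿ → ℝ` be a C² function with `u ≥ 0` everywhere,
satisfying `Δu ≥ (2/n)·u²` everywhere. Then `u` is identically zero. -/
theorem nonneg_solution_of_elliptic_ineq_vanishes
    {n : ℕ} (hn : 1 ≤ n) (u : EuclideanSpace ℝ (Fin n) → ℝ)
    (hu : ContDiff ℝ 2 u)
    (hnonneg : ∀ x, 0 ≤ u x)
    (hineq : ∀ x, laplacian u x ≥ (2 / (n : ℝ)) * (u x) ^ 2) :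
    ∀ x, u x = 0 := by
  intro x₀
  have hc : (0 : ℝ) < 2 / n := by
    have : (1 : ℝ) ≤ n := by exact_mod_cast hn
    positivity
  have hbound : ∀ R > 0, u x₀ ≤ 4 * (n + 6) / (2 / n * R ^ 2) := fun R hR =>
    le_div_sq_of_mul_sq_le_laplacian hc hR hu.contDiffOn fun x _ => hineq x
  have hlim : Tendsto (fun R : ℝ => 4 * (n + 6) / (2 / n * R ^ 2)) atTop (𝓝 0) :=
    tendsto_const_nhds.div_atTop ((tendsto_pow_atTop two_ne_zero).const_mul_atTop hc)
  exact le_antisymm (ge_of_tendsto hlim ((eventually_gt_atTop 0).mono hbound)) (hnonneg x₀)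
end

section
/- Let u : ℝ → ℝ be a C² function with u(s) ≥ 0 and u''(s) ≥ 2·u(s)² for all s ∈ ℝ. Then u is identically zero. -/
/-!
Since `u'' ≥ 2u² ≥ 0`, `u'` is nondecreasing. If `u'(a) > 0` somewhere, then `u → ∞` and the
energy `u'² - (4/3)u³` is nondecreasing beyond `a`, so eventually `u' ≥ (2/3) u^{3/2}`; then
`u^{-1/2}` decreases at a fixed positive rate while staying nonnegative, which is absurd.
Applied to `u` and to `s ↦ u (-s)`, this forces `u' ≡ 0`, hence `0 = u'' ≥ 2u²`.
-/

open Set Filter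

lemma false_of_eventually_mul_sqrt_le_deriv {u : ℝ → ℝ} {c : ℝ} (hc : 0 < c)
    (hu : Differentiable ℝ u)
    (hgrowth : ∀ᶠ s in atTop, 0 < u s ∧ c * (u s * √(u s)) ≤ deriv u s) : False := by
  obtain ⟨a, ha⟩ := eventually_atTop.mp hgrowth
  set w : ℝ → ℝ := fun s ↦ (√(u s))⁻¹
  have hw_deriv : ∀ s ≥ a, HasDerivAt w (-(deriv u s / (2 * √(u s))) / √(u s) ^ 2) s :=
    fun s hs ↦ ((hu s).hasDerivAt.sqrt (ha s hs).1.ne').inv (Real.sqrt_pos.2 (ha s hs).1).ne'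
  have hw_slope : ∀ s ∈ interior (Ici a), deriv w s ≤ -(c / 2) := by
    intro s hs
    rw [interior_Ici] at hs
    obtain ⟨hpos, hle⟩ := ha s hs.le
    have hsqrt : 0 < √(u s) := Real.sqrt_pos.2 hpos
    rw [(hw_deriv s hs.le).deriv, Real.sq_sqrt hpos.le, neg_div, neg_le_neg_iff, div_div,
      le_div_iff₀ (by positivity)]
    linarith
  set b := a + 2 * (w a + 1) / c
  have hwa : 0 ≤ w a := by positivity
  have hab : a ≤ b := le_add_of_nonneg_right (div_nonneg (by linarith) hc.le)
  have hdrop := (convex_Ici a).image_sub_le_mul_sub_of_deriv_le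
    (fun s hs ↦ (hw_deriv s hs).continuousAt.continuousWithinAt)
    (fun s hs ↦ (hw_deriv s (interior_subset hs)).differentiableAt.differentiableWithinAt)
    hw_slope a self_mem_Ici b hab hab
  have hwb : 0 ≤ w b := by positivity
  have : -(c / 2) * (b - a) = -(w a + 1) := by simp only [b]; field_simp; ring
  linarith

section

variable {u : ℝ → ℝ}

lemma monotone_deriv_of_two_mul_sq_le_deriv_deriv (hu' : Differentiable ℝ (deriv u))
    (hineq : ∀ s, deriv (deriv u) s ≥ 2 * u s ^ 2) : Monotone (deriv u) :=
  monotone_of_deriv_nonneg hu' fun s ↦ le_trans (by positivity) (hineq s)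

lemma monotoneOn_energy_of_two_mul_sq_le_deriv_deriv (hu : Differentiable ℝ u)
    (hu' : Differentiable ℝ (deriv u)) (hineq : ∀ s, deriv (deriv u) s ≥ 2 * u s ^ 2) {a : ℝ}
    (hderiv : ∀ s ≥ a, 0 ≤ deriv u s) :
    MonotoneOn (fun s ↦ deriv u s ^ 2 - 4 / 3 * u s ^ 3) (Ici a) := by
  have hE : ∀ s, HasDerivAt (fun s ↦ deriv u s ^ 2 - 4 / 3 * u s ^ 3)
      (2 * deriv u s * (deriv (deriv u) s - 2 * u s ^ 2)) s := by
    intro s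
    exact ((hu' s).hasDerivAt.fun_pow 2).fun_sub
      (((hu s).hasDerivAt.fun_pow 3).const_mul (4 / 3)) |>.congr_deriv (by push_cast; ring)
  refine monotoneOn_of_hasDerivWithinAt_nonneg (convex_Ici a)
    (fun s _ ↦ (hE s).continuousAt.continuousWithinAt) (fun s _ ↦ (hE s).hasDerivWithinAt)
    fun s hs ↦ ?_
  rw [interior_Ici] at hs
  exact mul_nonneg (mul_nonneg zero_le_two (hderiv s hs.le)) (sub_nonneg.2 (hineq s))

lemma deriv_nonpos_of_two_mul_sq_le_deriv_deriv (hu : Differentiable ℝ u)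
    (hu' : Differentiable ℝ (deriv u)) (hineq : ∀ s, deriv (deriv u) s ≥ 2 * u s ^ 2) (a : ℝ) :
    deriv u a ≤ 0 := by
  by_contra! hd
  have hd_le : ∀ s ≥ a, deriv u a ≤ deriv u s :=
    fun s hs ↦ monotone_deriv_of_two_mul_sq_le_deriv_deriv hu' hineq hs
  have hlinear : ∀ s ≥ a, u a + deriv u a * (s - a) ≤ u s := by
    intro s hs
    have := (convex_Ici a).mul_sub_le_image_sub_of_le_deriv hu.continuous.continuousOn
      hu.differentiableOn (fun t ht ↦ hd_le t (interior_subset ht)) a self_mem_Ici s hs hs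
    linarith
  have htendsto : Tendsto u atTop atTop := by
    refine tendsto_atTop_mono' _ (eventually_ge_atTop a |>.mono hlinear) ?_
    exact tendsto_atTop_add_const_left _ _
      (((tendsto_atTop_add_const_right _ _ tendsto_id).const_mul_atTop hd))
  apply false_of_eventually_mul_sqrt_le_deriv (c := 2 / 3) (by norm_num) hu
  filter_upwards [htendsto.eventually_ge_atTop (2 * |u a| + 1), eventually_ge_atTop a]
    with s hus hs
  have hpos : 0 < u s := by linarith [abs_nonneg (u a)]
  have hcube : 2 * u a ^ 3 ≤ u s ^ 3 := by
    nlinarith [abs_nonneg (u a), le_abs_self (u a), sq_abs (u a), pow_le_pow_left₀ (by positivity)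
      (show 2 * |u a| ≤ u s by linarith) 3]
  have henergy := monotoneOn_energy_of_two_mul_sq_le_deriv_deriv hu hu' hineq
    (fun t ht ↦ hd.le.trans (hd_le t ht)) self_mem_Ici (mem_Ici.2 hs) hs
  refine ⟨hpos, (pow_le_pow_iff_left₀ (by positivity) (hd.le.trans (hd_le s hs))
    two_ne_zero).1 ?_⟩
  have : (2 / 3 * (u s * √(u s))) ^ 2 = 4 / 9 * u s ^ 3 := by
    rw [mul_pow, mul_pow, Real.sq_sqrt hpos.le]; ring
  simp only at henergy
  nlinarith [sq_nonneg (deriv u a)]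

end

lemma deriv_comp_neg' (u : ℝ → ℝ) : deriv (fun t ↦ u (-t)) = fun t ↦ -deriv u (-t) :=
  funext (deriv_comp_neg u)

theorem one_dim_elliptic_ineq_vanishes_general
    (u : ℝ → ℝ) (hu : ContDiff ℝ 2 u)
    (hineq : ∀ s, deriv (deriv u) s ≥ 2 * (u s) ^ 2) :
    ∀ s, u s = 0 := by
  have hu1 : Differentiable ℝ u := hu.differentiable two_ne_zero
  have hu2 : Differentiable ℝ (deriv u) := hu.differentiable_deriv_two
  have hreflect_ineq : ∀ s, deriv (deriv fun t ↦ u (-t)) s ≥ 2 * u (-s) ^ 2 := by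
    intro s
    rw [deriv_comp_neg', deriv.fun_neg, deriv_comp_neg, neg_neg]
    exact hineq (-s)
  have hderiv_zero : deriv u = 0 := by
    funext s
    have hreflect := deriv_nonpos_of_two_mul_sq_le_deriv_deriv (u := fun t ↦ u (-t))
      (hu1.comp differentiable_neg)
      (by rw [deriv_comp_neg']; exact (hu2.comp differentiable_neg).neg)
      hreflect_ineq (-s)
    rw [deriv_comp_neg, neg_neg, neg_nonpos] at hreflect
    exact le_antisymm (deriv_nonpos_of_two_mul_sq_le_deriv_deriv hu1 hu2 hineq s) hreflect
  intro s
  have hsq := hineq s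
  rw [hderiv_zero, Pi.zero_def, deriv_const] at hsq
  exact pow_eq_zero_iff two_ne_zero |>.1 (le_antisymm (by linarith) (sq_nonneg _))

/-- Let `u : ℝ → ℝ` be a C² function with `u(s) ≥ 0` and `u''(s) ≥ 2·u(s)²`
for all `s ∈ ℝ`. Then `u` is identically zero. -/
theorem one_dim_elliptic_ineq_vanishes
    (u : ℝ → ℝ) (hu : ContDiff ℝ 2 u)
    (hnonneg : ∀ s, 0 ≤ u s)
    (hineq : ∀ s, deriv (deriv u) s ≥ 2 * (u s) ^ 2) :
    ∀ s, u s = 0 :=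
  one_dim_elliptic_ineq_vanishes_general u hu hineq
end

section
/- Let N ≥ 2, λ ≥ 0, and let γ : ℝ → ℝᴺ be a smooth curve parametrized by arc length (‖γ'(s)‖ = 1 for all s). Assume γ is λ-biminimal, i.e., for every s and every vector v ∈ ℝᴺ with ⟨v, γ'(s)⟩ = 0 one has ⟨−γ⁗(s) + λ·γ''(s), v⟩ = 0. Then the function u(s) = ‖γ''(s)‖² satisfies u''(s) ≥ 2·u(s)² for all s. -/
open scoped InnerProductSpace

/-- Let `N ≥ 2`, `λ ≥ 0`, and `γ : ℝ → ℝᴺ` a smooth unit-speed curve which is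
`λ`-biminimal (the component of `−γ⁗ + λγ''` orthogonal to `γ'` vanishes).
Then `u = ‖γ''‖²` satisfies `u'' ≥ 2u²`. -/
theorem biminimal_curve_elliptic_ineq
    {N : ℕ} (hN : 2 ≤ N) (lam : ℝ) (hlam : 0 ≤ lam)
    (γ : ℝ → EuclideanSpace ℝ (Fin N)) (hγ : ContDiff ℝ (⊤ : ℕ∞) γ)
    (harc : ∀ s, ‖deriv γ s‖ = 1)
    (hbimin : ∀ s, ∀ v : EuclideanSpace ℝ (Fin N), ⟪v, deriv γ s⟫_ℝ = 0 →
      ⟪-(iteratedDeriv 4 γ s) + lam • iteratedDeriv 2 γ s, v⟫_ℝ = 0) :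
    ∀ s, deriv (deriv (fun t => ‖iteratedDeriv 2 γ t‖ ^ 2)) s ≥
      2 * (‖iteratedDeriv 2 γ s‖ ^ 2) ^ 2 := by
  set D : ℕ → ℝ → EuclideanSpace ℝ (Fin N) := fun n => iteratedDeriv n γ with hD
  have hasD : ∀ (n : ℕ) (s : ℝ), HasDerivAt (D n) (D (n+1) s) s := by
    intro n s
    have hdiff : Differentiable ℝ (D n) :=
      hγ.differentiable_iteratedDeriv n (by exact_mod_cast lt_top_iff_ne_top.2 (by simp))
    have := (hdiff s).hasDerivAt
    rwa [hD, ← iteratedDeriv_succ] at this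
  have hD1 : D 1 = deriv γ := by rw [hD]; exact iteratedDeriv_one
  -- ⟪D1, D1⟫ = 1
  have hunit : ∀ s, ⟪D 1 s, D 1 s⟫_ℝ = 1 := by
    intro s
    rw [real_inner_self_eq_norm_sq, hD1, harc s, one_pow]
  -- orthogonality ⟪D2, D1⟫ = 0
  have orth : ∀ s, ⟪D 2 s, D 1 s⟫_ℝ = 0 := by
    intro s
    have h1 : HasDerivAt (fun t => ⟪D 1 t, D 1 t⟫_ℝ)
        (⟪D 1 s, D 2 s⟫_ℝ + ⟪D 2 s, D 1 s⟫_ℝ) s := (hasD 1 s).inner ℝ (hasD 1 s)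
    have h2 : HasDerivAt (fun t => ⟪D 1 t, D 1 t⟫_ℝ) 0 s := by
      have : (fun t => ⟪D 1 t, D 1 t⟫_ℝ) = fun _ => (1 : ℝ) := funext fun t => hunit t
      rw [this]; exact hasDerivAt_const s 1
    have := h1.unique h2
    rw [real_inner_comm (D 2 s) (D 1 s)] at this
    linarith
  -- ⟪D3, D1⟫ = -‖D2‖²
  have key3 : ∀ s, ⟪D 3 s, D 1 s⟫_ℝ = -⟪D 2 s, D 2 s⟫_ℝ := by
    intro s
    have h1 : HasDerivAt (fun t => ⟪D 2 t, D 1 t⟫_ℝ)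
        (⟪D 2 s, D 2 s⟫_ℝ + ⟪D 3 s, D 1 s⟫_ℝ) s := (hasD 2 s).inner ℝ (hasD 1 s)
    have h2 : HasDerivAt (fun t => ⟪D 2 t, D 1 t⟫_ℝ) 0 s := by
      have : (fun t => ⟪D 2 t, D 1 t⟫_ℝ) = fun _ => (0 : ℝ) := funext fun t => orth t
      rw [this]; exact hasDerivAt_const s 0
    have := h1.unique h2
    linarith
  -- biminimality: ⟪D4, D2⟫ = lam * ⟪D2, D2⟫
  have hb : ∀ s, ⟪D 4 s, D 2 s⟫_ℝ = lam * ⟪D 2 s, D 2 s⟫_ℝ := by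
    intro s
    have h0 : ⟪D 2 s, deriv γ s⟫_ℝ = 0 := by rw [← hD1]; exact orth s
    have := hbimin s (D 2 s) h0
    rw [inner_add_left, inner_neg_left, real_inner_smul_left] at this
    rw [hD] at this ⊢
    linarith
  intro s
  -- rewrite the target function as inner products
  have hfun : (fun t => ‖iteratedDeriv 2 γ t‖ ^ 2) = fun t => ⟪D 2 t, D 2 t⟫_ℝ :=
    funext fun t => (real_inner_self_eq_norm_sq _).symm
  have hderiv1 : deriv (fun t => ⟪D 2 t, D 2 t⟫_ℝ)
      = fun t => ⟪D 2 t, D 3 t⟫_ℝ + ⟪D 3 t, D 2 t⟫_ℝ :=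
    funext fun t => ((hasD 2 t).inner ℝ (hasD 2 t)).deriv
  have hderiv2 : deriv (fun t => ⟪D 2 t, D 3 t⟫_ℝ + ⟪D 3 t, D 2 t⟫_ℝ) s
      = (⟪D 2 s, D 4 s⟫_ℝ + ⟪D 3 s, D 3 s⟫_ℝ) + (⟪D 3 s, D 3 s⟫_ℝ + ⟪D 4 s, D 2 s⟫_ℝ) :=
    (((hasD 2 s).inner ℝ (hasD 3 s)).add ((hasD 3 s).inner ℝ (hasD 2 s))).deriv
  rw [hfun, hderiv1, hderiv2]
  have hCS := real_inner_mul_inner_self_le (D 3 s) (D 1 s)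
  rw [hunit s, mul_one, key3 s] at hCS
  have h42 := hb s
  have h24 : ⟪D 2 s, D 4 s⟫_ℝ = lam * ⟪D 2 s, D 2 s⟫_ℝ := by
    rw [real_inner_comm]; exact h42
  have hnn : (0:ℝ) ≤ ⟪D 2 s, D 2 s⟫_ℝ := real_inner_self_nonneg
  have hnorm : ‖iteratedDeriv 2 γ s‖ ^ 2 = ⟪D 2 s, D 2 s⟫_ℝ := by
    rw [real_inner_self_eq_norm_sq, hD]
  rw [ge_iff_le, hnorm, h24, h42]
  nlinarith [mul_nonneg hlam hnn]
end

section
/- Let N ≥ 2, λ ≥ 0, and let γ : ℝ → ℝᴺ be a smooth curve parametrized by arc length (‖γ'(s)‖ = 1 for all s) which is a proper map (the preimage of every compact subset of ℝᴺ is compact in ℝ). Assume γ is λ-biminimal, i.e., for every s and every v ∈ ℝᴺ with ⟨v, γ'(s)⟩ = 0 one has ⟨−γ⁗(s) + λ·γ''(s), v⟩ = 0. Then γ'' ≡ 0; equivalently, γ(s) = γ(0) + s·γ'(0) is a straight line. -/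
open scoped InnerProductSpace



/-- One-sided blow-up lemma: a nonnegative `C²` function on `ℝ` with
`u'' ≥ 2u²`, `u 0 > 0` and `u' 0 ≥ 0` cannot exist (finite-time blow-up). -/
lemma blowup_aux (u u' u'' : ℝ → ℝ)
    (hu : ∀ s, HasDerivAt u (u' s) s)
    (hu' : ∀ s, HasDerivAt u' (u'' s) s)
    (hpos : ∀ s, 0 ≤ u s)
    (hineq : ∀ s, 2 * (u s) ^ 2 ≤ u'' s)
    (h0 : 0 < u 0) (h0' : 0 ≤ u' 0) : False := by
  set c := u 0 with hc
  -- u' is monotone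
  have hu'mono : Monotone u' :=
    monotone_of_deriv_nonneg (fun s => (hu' s).differentiableAt)
      (fun s => by rw [(hu' s).deriv]; exact le_trans (by positivity) (hineq s))
  have hu'nn : ∀ s, 0 ≤ s → 0 ≤ u' s := fun s hs => h0'.trans (hu'mono hs)
  -- u is monotone on [0,∞)
  have humono : MonotoneOn u (Set.Ici 0) := by
    apply monotoneOn_of_deriv_nonneg (convex_Ici 0)
      (fun x _ => ((hu x).differentiableAt.continuousAt).continuousWithinAt)
      (fun x _ => (hu x).differentiableAt.differentiableWithinAt)
    intro x hx
    rw [interior_Ici] at hx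
    rw [(hu x).deriv]
    exact hu'nn x (le_of_lt hx)
  have huc : ∀ s, 0 ≤ s → c ≤ u s := fun s hs =>
    humono (Set.mem_Ici.2 le_rfl) (Set.mem_Ici.2 hs) hs
  -- growth : u' s ≥ 2 c² s for s ≥ 0
  have hp : ∀ s : ℝ, HasDerivAt (fun t => u' t - 2 * c ^ 2 * t) (u'' s - 2 * c ^ 2) s := by
    intro s
    exact ((hu' s).sub ((hasDerivAt_id' s).const_mul (2 * c ^ 2))).congr_deriv (by ring)
  have pmono : MonotoneOn (fun t => u' t - 2 * c ^ 2 * t) (Set.Ici 0) := by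
    apply monotoneOn_of_deriv_nonneg (convex_Ici 0)
      (fun x _ => ((hp x).differentiableAt.continuousAt).continuousWithinAt)
      (fun x _ => (hp x).differentiableAt.differentiableWithinAt)
    intro x hx
    rw [interior_Ici] at hx
    rw [(hp x).deriv]
    have h1 : c ≤ u x := huc x hx.le
    have h2 : c ^ 2 ≤ (u x) ^ 2 := pow_le_pow_left₀ h0.le h1 2
    nlinarith [hineq x]
  have hu'growth : ∀ s, 0 ≤ s → 2 * c ^ 2 * s ≤ u' s := by
    intro s hs
    have := pmono (Set.mem_Ici.2 le_rfl) (Set.mem_Ici.2 hs) hs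
    simp only [mul_zero] at this
    linarith
  -- growth : u s ≥ c + c² s² for s ≥ 0
  have hq : ∀ s : ℝ, HasDerivAt (fun t => u t - (c + c ^ 2 * t ^ 2))
      (u' s - c ^ 2 * (2 * s)) s := by
    intro s
    have h2 : HasDerivAt (fun t : ℝ => c + c ^ 2 * t ^ 2) (c ^ 2 * (2 * s)) s := by
      simpa using (((hasDerivAt_pow 2 s)).const_mul (c ^ 2)).const_add c
    exact (hu s).sub h2
  have qmono : MonotoneOn (fun t => u t - (c + c ^ 2 * t ^ 2)) (Set.Ici 0) := by
    apply monotoneOn_of_deriv_nonneg (convex_Ici 0)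
      (fun x _ => ((hq x).differentiableAt.continuousAt).continuousWithinAt)
      (fun x _ => (hq x).differentiableAt.differentiableWithinAt)
    intro x hx
    rw [interior_Ici] at hx
    rw [(hq x).deriv]
    have := hu'growth x hx.le
    nlinarith
  have ugrowth : ∀ s, 0 ≤ s → c + c ^ 2 * s ^ 2 ≤ u s := by
    intro s hs
    have := qmono (Set.mem_Ici.2 le_rfl) (Set.mem_Ici.2 hs) hs
    simp only at this
    nlinarith
  -- point where u ≥ 2c
  set s₁ := Real.sqrt c⁻¹ with hs₁
  have hs₁nn : 0 ≤ s₁ := Real.sqrt_nonneg _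
  have hus₁ : 2 * c ≤ u s₁ := by
    have h1 := ugrowth s₁ hs₁nn
    have h2 : s₁ ^ 2 = c⁻¹ := Real.sq_sqrt (by positivity)
    rw [h2] at h1
    have h3 : c ^ 2 * c⁻¹ = c := by field_simp
    rw [h3] at h1
    linarith
  have hu1 : ∀ s, s₁ ≤ s → 2 * c ≤ u s := fun s hs =>
    hus₁.trans (humono (Set.mem_Ici.2 hs₁nn) (Set.mem_Ici.2 (hs₁nn.trans hs)) hs)
  -- energy E = u'² - (4/3) u³ is monotone on [0,∞)
  have hE : ∀ s : ℝ, HasDerivAt (fun t => (u' t) ^ 2 - 4 / 3 * (u t) ^ 3)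
      (2 * u' s ^ 1 * u'' s - 4 / 3 * (3 * u s ^ 2 * u' s)) s := by
    intro s
    exact ((hu' s).pow 2).sub (((hu s).pow 3).const_mul (4 / 3))
  have Emono : MonotoneOn (fun t => (u' t) ^ 2 - 4 / 3 * (u t) ^ 3) (Set.Ici 0) := by
    apply monotoneOn_of_deriv_nonneg (convex_Ici 0)
      (fun x _ => ((hE x).differentiableAt.continuousAt).continuousWithinAt)
      (fun x _ => (hE x).differentiableAt.differentiableWithinAt)
    intro x hx
    rw [interior_Ici] at hx
    rw [(hE x).deriv]
    nlinarith [hu'nn x hx.le, hineq x]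
  -- cube inequality: for s ≥ s₁, u³ ≤ u'²
  have hcube : ∀ s, s₁ ≤ s → (u s) ^ 3 ≤ (u' s) ^ 2 := by
    intro s hs
    have hEs := Emono (Set.mem_Ici.2 le_rfl) (Set.mem_Ici.2 (hs₁nn.trans hs))
      (hs₁nn.trans hs)
    simp only at hEs
    have h2c : 2 * c ≤ u s := hu1 s hs
    have h8 : (2 * c) ^ 3 ≤ (u s) ^ 3 := pow_le_pow_left₀ (by positivity) h2c 3
    nlinarith [sq_nonneg (u' 0)]
  -- hence u' s ≥ u s * √(u s) for s ≥ s₁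
  have hupos : ∀ s, s₁ ≤ s → 0 < u s := fun s hs => lt_of_lt_of_le (by linarith) (hu1 s hs)
  have hlow : ∀ s, s₁ ≤ s → u s * Real.sqrt (u s) ≤ u' s := by
    intro s hs
    have hup := hupos s hs
    have h1 : (u s * Real.sqrt (u s)) ^ 2 = (u s) ^ 3 := by
      rw [mul_pow, Real.sq_sqrt hup.le]; ring
    have h2 : u s * Real.sqrt (u s) = Real.sqrt ((u s) ^ 3) := by
      rw [← h1, Real.sqrt_sq (by positivity)]
    rw [h2]
    calc Real.sqrt ((u s) ^ 3) ≤ Real.sqrt ((u' s) ^ 2) :=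
          Real.sqrt_le_sqrt (hcube s hs)
      _ = u' s := Real.sqrt_sq (hu'nn s (hs₁nn.trans hs))
  -- w = 1/√u has derivative ≤ -1/2 on [s₁,∞)
  set w : ℝ → ℝ := fun t => (Real.sqrt (u t))⁻¹ with hwdef
  have hw : ∀ s, s₁ ≤ s → HasDerivAt w
      (-(u' s / (2 * Real.sqrt (u s))) / (Real.sqrt (u s)) ^ 2) s := by
    intro s hs
    have hup := hupos s hs
    exact ((hu s).sqrt hup.ne').inv (Real.sqrt_ne_zero'.2 hup)
  have hwle : ∀ s, s₁ ≤ s →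
      -(u' s / (2 * Real.sqrt (u s))) / (Real.sqrt (u s)) ^ 2 ≤ -(1 / 2) := by
    intro s hs
    have hup := hupos s hs
    have ha : 0 < Real.sqrt (u s) := Real.sqrt_pos.2 hup
    have ha2 : (Real.sqrt (u s)) ^ 2 = u s := Real.sq_sqrt hup.le
    have key := hlow s hs
    rw [neg_div, neg_le_neg_iff, div_div, le_div_iff₀ (by positivity)]
    calc 1 / 2 * (2 * Real.sqrt (u s) * Real.sqrt (u s) ^ 2)
        = Real.sqrt (u s) * (Real.sqrt (u s)) ^ 2 := by ring
      _ = Real.sqrt (u s) * u s := by rw [ha2]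
      _ = u s * Real.sqrt (u s) := mul_comm _ _
      _ ≤ u' s := key
  -- g = w + t/2 is antitone on [s₁,∞)
  have hg : ∀ s, s₁ ≤ s → HasDerivAt (fun t => w t + t / 2)
      (-(u' s / (2 * Real.sqrt (u s))) / (Real.sqrt (u s)) ^ 2 + 1 / 2) s := by
    intro s hs
    exact ((hw s hs).add ((hasDerivAt_id' s).div_const 2)).congr_deriv (by ring)
  have gant : AntitoneOn (fun t => w t + t / 2) (Set.Ici s₁) := by
    apply antitoneOn_of_deriv_nonpos (convex_Ici s₁)
    · intro x hx
      exact ((hg x hx).differentiableAt.continuousAt).continuousWithinAt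
    · intro x hx
      rw [interior_Ici] at hx
      exact (hg x hx.le).differentiableAt.differentiableWithinAt
    · intro x hx
      rw [interior_Ici] at hx
      rw [(hg x hx.le).deriv]
      have := hwle x hx.le
      linarith
  -- contradiction at s₂
  have hw1nn : 0 ≤ w s₁ := by positivity
  set s₂ := s₁ + 2 * w s₁ + 2 with hs₂
  have hs₂ge : s₁ ≤ s₂ := by linarith
  have := gant (Set.mem_Ici.2 le_rfl) (Set.mem_Ici.2 hs₂ge) hs₂ge
  have hw2nn : 0 ≤ w s₂ := by positivity
  simp only at this
  rw [hs₂] at this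
  linarith

/-- A nonnegative `C²` function on `ℝ` satisfying `u'' ≥ 2u²` vanishes. -/
lemma nonneg_superquad_eq_zero (u u' u'' : ℝ → ℝ)
    (hu : ∀ s, HasDerivAt u (u' s) s)
    (hu' : ∀ s, HasDerivAt u' (u'' s) s)
    (hpos : ∀ s, 0 ≤ u s)
    (hineq : ∀ s, 2 * (u s) ^ 2 ≤ u'' s) : ∀ s, u s = 0 := by
  intro s₀
  by_contra h
  have hs0 : 0 < u s₀ := lt_of_le_of_ne (hpos s₀) (Ne.symm h)
  rcases le_or_gt 0 (u' s₀) with hd | hd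
  · -- forward direction
    apply blowup_aux (fun t => u (s₀ + t)) (fun t => u' (s₀ + t)) (fun t => u'' (s₀ + t))
    · intro s
      have := (hu (s₀ + s)).comp s ((hasDerivAt_id s).const_add s₀)
      exact this.congr_deriv (by simp)
    · intro s
      have := (hu' (s₀ + s)).comp s ((hasDerivAt_id s).const_add s₀)
      exact this.congr_deriv (by simp)
    · intro s; exact hpos _
    · intro s; exact hineq _
    · simpa using hs0
    · simpa using hd
  · -- backward direction
    apply blowup_aux (fun t => u (s₀ - t)) (fun t => -(u' (s₀ - t))) (fun t => u'' (s₀ - t))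
    · intro s
      have := (hu (s₀ - s)).comp s ((hasDerivAt_id s).const_sub s₀)
      exact this.congr_deriv (by simp)
    · intro s
      have := ((hu' (s₀ - s)).comp s ((hasDerivAt_id s).const_sub s₀)).neg
      exact this.congr_deriv (by simp)
    · intro s; exact hpos _
    · intro s; exact hineq _
    · simpa using hs0
    · simpa using hd.le

/-- Let `N ≥ 2`, `λ ≥ 0`, and `γ : ℝ → ℝᴺ` a smooth unit-speed properly
immersed curve which is `λ`-biminimal (the component of `−γ⁗ + λγ''`
orthogonal to `γ'` vanishes). Then `γ'' ≡ 0`; equivalently,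
`γ(s) = γ(0) + s·γ'(0)` is a straight line. -/
theorem biminimal_proper_curve_is_line
    {N : ℕ} (hN : 2 ≤ N) (lam : ℝ) (hlam : 0 ≤ lam)
    (γ : ℝ → EuclideanSpace ℝ (Fin N)) (hγ : ContDiff ℝ (⊤ : ℕ∞) γ)
    (harc : ∀ s, ‖deriv γ s‖ = 1)
    (hproper : ∀ K : Set (EuclideanSpace ℝ (Fin N)), IsCompact K →
      IsCompact (γ ⁻¹' K))
    (hbimin : ∀ s, ∀ v : EuclideanSpace ℝ (Fin N), ⟪v, deriv γ s⟫_ℝ = 0 →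
      ⟪-(iteratedDeriv 4 γ s) + lam • iteratedDeriv 2 γ s, v⟫_ℝ = 0) :
    (∀ s, iteratedDeriv 2 γ s = 0) ∧ (∀ s, γ s = γ 0 + s • deriv γ 0) := by
  -- successive derivatives
  set γ1 := deriv γ with hγ1
  set γ2 := deriv γ1 with hγ2
  set γ3 := deriv γ2 with hγ3
  set γ4 := deriv γ3 with hγ4
  have hγ' : ContDiff ℝ ((⊤ : ℕ∞) : WithTop ℕ∞) γ := hγ.of_le (by simp)
  have h1 : ContDiff ℝ ((⊤ : ℕ∞) : WithTop ℕ∞) γ1 := (contDiff_infty_iff_deriv.mp hγ').2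
  have h2 : ContDiff ℝ ((⊤ : ℕ∞) : WithTop ℕ∞) γ2 := (contDiff_infty_iff_deriv.mp h1).2
  have h3 : ContDiff ℝ ((⊤ : ℕ∞) : WithTop ℕ∞) γ3 := (contDiff_infty_iff_deriv.mp h2).2
  have d0 : ∀ s, HasDerivAt γ (γ1 s) s := fun s => (hγ'.differentiable (by simp) s).hasDerivAt
  have d1 : ∀ s, HasDerivAt γ1 (γ2 s) s := fun s => (h1.differentiable (by simp) s).hasDerivAt
  have d2 : ∀ s, HasDerivAt γ2 (γ3 s) s := fun s => (h2.differentiable (by simp) s).hasDerivAt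
  have d3 : ∀ s, HasDerivAt γ3 (γ4 s) s := fun s => (h3.differentiable (by simp) s).hasDerivAt
  have it2 : iteratedDeriv 2 γ = γ2 := by
    rw [iteratedDeriv_succ, iteratedDeriv_one]
  have it4 : iteratedDeriv 4 γ = γ4 := by
    rw [iteratedDeriv_succ, iteratedDeriv_succ, iteratedDeriv_succ, iteratedDeriv_one]
  -- unit speed
  have hTT : ∀ s, ⟪γ1 s, γ1 s⟫_ℝ = 1 := fun s => by
    rw [real_inner_self_eq_norm_mul_norm, harc s]; norm_num
  -- ⟪γ2, γ1⟫ = 0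
  have h21 : ∀ s, ⟪γ2 s, γ1 s⟫_ℝ = 0 := by
    intro s
    have hD : HasDerivAt (fun t => ⟪γ1 t, γ1 t⟫_ℝ) (⟪γ1 s, γ2 s⟫_ℝ + ⟪γ2 s, γ1 s⟫_ℝ) s :=
      (d1 s).inner ℝ (d1 s)
    have hC : HasDerivAt (fun t => ⟪γ1 t, γ1 t⟫_ℝ) 0 s := by
      have he : (fun t => ⟪γ1 t, γ1 t⟫_ℝ) = fun _ => (1 : ℝ) := funext hTT
      rw [he]; exact hasDerivAt_const s 1
    have huniq := hD.unique hC
    have hsymm : ⟪γ1 s, γ2 s⟫_ℝ = ⟪γ2 s, γ1 s⟫_ℝ := real_inner_comm _ _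
    linarith
  -- ⟪γ3, γ1⟫ = -⟪γ2, γ2⟫
  have h31 : ∀ s, ⟪γ3 s, γ1 s⟫_ℝ = -⟪γ2 s, γ2 s⟫_ℝ := by
    intro s
    have hD : HasDerivAt (fun t => ⟪γ2 t, γ1 t⟫_ℝ) (⟪γ2 s, γ2 s⟫_ℝ + ⟪γ3 s, γ1 s⟫_ℝ) s :=
      (d2 s).inner ℝ (d1 s)
    have hC : HasDerivAt (fun t => ⟪γ2 t, γ1 t⟫_ℝ) 0 s := by
      have he : (fun t => ⟪γ2 t, γ1 t⟫_ℝ) = fun _ => (0 : ℝ) := funext h21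
      rw [he]; exact hasDerivAt_const s 0
    have huniq := hD.unique hC
    linarith
  -- biminimality: ⟪γ4, γ2⟫ = lam ⟪γ2, γ2⟫
  have h42 : ∀ s, ⟪γ4 s, γ2 s⟫_ℝ = lam * ⟪γ2 s, γ2 s⟫_ℝ := by
    intro s
    have hb := hbimin s (γ2 s) (h21 s)
    rw [it2, it4] at hb
    rw [inner_add_left, inner_neg_left, real_inner_smul_left] at hb
    linarith
  -- the squared mean curvature
  set u : ℝ → ℝ := fun s => ⟪γ2 s, γ2 s⟫_ℝ with hudef
  set u' : ℝ → ℝ := fun s => ⟪γ2 s, γ3 s⟫_ℝ + ⟪γ3 s, γ2 s⟫_ℝ with hu'def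
  set u'' : ℝ → ℝ := fun s =>
    (⟪γ2 s, γ4 s⟫_ℝ + ⟪γ3 s, γ3 s⟫_ℝ) + (⟪γ3 s, γ3 s⟫_ℝ + ⟪γ4 s, γ2 s⟫_ℝ) with hu''def
  have hu : ∀ s, HasDerivAt u (u' s) s := fun s => (d2 s).inner ℝ (d2 s)
  have hu' : ∀ s, HasDerivAt u' (u'' s) s := fun s =>
    ((d2 s).inner ℝ (d3 s)).add ((d3 s).inner ℝ (d2 s))
  have hpos : ∀ s, 0 ≤ u s := fun s => real_inner_self_nonneg
  have hineq : ∀ s, 2 * (u s) ^ 2 ≤ u'' s := by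
    intro s
    have hCS := real_inner_mul_inner_self_le (γ3 s) (γ1 s)
    rw [hTT s, mul_one, h31 s] at hCS
    have h42' := h42 s
    have h24 : ⟪γ2 s, γ4 s⟫_ℝ = ⟪γ4 s, γ2 s⟫_ℝ := real_inner_comm _ _
    have hnn : 0 ≤ lam * ⟪γ2 s, γ2 s⟫_ℝ := mul_nonneg hlam real_inner_self_nonneg
    simp only [hudef, hu''def]
    nlinarith
  have huzero : ∀ s, u s = 0 := nonneg_superquad_eq_zero u u' u'' hu hu' hpos hineq
  have hγ2zero : ∀ s, γ2 s = 0 := fun s => inner_self_eq_zero.mp (huzero s)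
  constructor
  · intro s; rw [it2]; exact hγ2zero s
  · intro s
    have hconst : ∀ t, γ1 t = γ1 0 := fun t =>
      is_const_of_deriv_eq_zero (h1.differentiable (by simp)) hγ2zero t 0
    have hder : ∀ t, HasDerivAt (fun r => γ r - r • γ1 0) 0 t := by
      intro t
      have h := (d0 t).sub ((hasDerivAt_id t).smul_const (γ1 0))
      exact h.congr_deriv (by simp [hconst t])
    have hc := is_const_of_deriv_eq_zero (fun t => (hder t).differentiableAt)
      (fun t => (hder t).deriv) s 0
    simp only [zero_smul, sub_zero] at hc
    exact sub_eq_iff_eq_add.mp hc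
end

section
/- Let λ ∈ ℝ and let γ : ℝ → ℝ² be a smooth plane curve parametrized by arc length (‖γ'(s)‖ = 1 for all s). Writing γ'(s) = (x'(s), y'(s)), let n(s) = (−y'(s), x'(s)) be the unit normal obtained by rotating γ'(s) by π/2, and let k(s) = ⟨γ''(s), n(s)⟩ be the signed curvature. Then γ is λ-biminimal, i.e., ⟨−γ⁗(s) + λ·γ''(s), n(s)⟩ = 0 for all s, if and only if k satisfies the ordinary differential equation k''(s) − k(s)³ − λ·k(s) = 0 for all s. -/
open scoped InnerProductSpace

/-- Let `λ ∈ ℝ` and `γ : ℝ → ℝ²` a smooth unit-speed plane curve. With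
`n(s) = (−y'(s), x'(s))` the unit normal (rotation of `γ'(s)` by `π/2`) and
`k(s) = ⟨γ''(s), n(s)⟩` the signed curvature, the curve `γ` is `λ`-biminimal
(`⟨−γ⁗ + λγ'', n⟩ = 0`) if and only if `k'' − k³ − λk = 0` on `ℝ`. -/
theorem plane_curve_biminimal_iff_curvature_ode
    (lam : ℝ) (γ : ℝ → EuclideanSpace ℝ (Fin 2)) (hγ : ContDiff ℝ (⊤ : ℕ∞) γ)
    (harc : ∀ s, ‖deriv γ s‖ = 1)
    (nvec : ℝ → EuclideanSpace ℝ (Fin 2))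
    (hnvec : ∀ s, nvec s = ![-(deriv γ s 1), deriv γ s 0])
    (k : ℝ → ℝ) (hk : ∀ s, k s = ⟪iteratedDeriv 2 γ s, nvec s⟫_ℝ) :
    (∀ s, ⟪-(iteratedDeriv 4 γ s) + lam • iteratedDeriv 2 γ s, nvec s⟫_ℝ = 0)
      ↔ (∀ s, deriv (deriv k) s - (k s) ^ 3 - lam * k s = 0) := by
  -- coordinate derivatives
  have hF : ∀ (n : ℕ) (i : Fin 2) (s : ℝ),
      HasDerivAt (fun t => iteratedDeriv n γ t i) (iteratedDeriv (n+1) γ s i) s := by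
    intro n i s
    have hd : HasDerivAt (iteratedDeriv n γ) (iteratedDeriv (n+1) γ s) s := by
      rw [iteratedDeriv_succ]
      exact ((hγ.differentiable_iteratedDeriv n (by exact_mod_cast ENat.natCast_lt_top n)) s).hasDerivAt
    exact (EuclideanSpace.proj i).hasFDerivAt.comp_hasDerivAt s hd
  have hF1 : ∀ (i : Fin 2) (s : ℝ),
      HasDerivAt (fun t => deriv γ t i) (iteratedDeriv 2 γ s i) s := by
    intro i s
    simpa [iteratedDeriv_one] using hF 1 i s
  -- curvature formula
  have hk4 : ∀ s, k s = -(iteratedDeriv 2 γ s 0) * (deriv γ s 1)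
      + (iteratedDeriv 2 γ s 1) * (deriv γ s 0) := by
    intro s
    rw [hk s]
    simp [PiLp.inner_apply, Fin.sum_univ_two, hnvec s]
    ring
  -- unit speed
  have hr1 : ∀ s, (deriv γ s 0)^2 + (deriv γ s 1)^2 = 1 := by
    intro s
    have h1 : Real.sqrt (∑ i, ‖deriv γ s i‖^2) = 1 := (EuclideanSpace.norm_eq (deriv γ s)) ▸ harc s
    have := Real.sqrt_eq_one.mp h1
    simpa [Fin.sum_univ_two, Real.norm_eq_abs, sq_abs] using this
  -- orthogonality
  have hr2 : ∀ s, deriv γ s 0 * iteratedDeriv 2 γ s 0 + deriv γ s 1 * iteratedDeriv 2 γ s 1 = 0 := by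
    intro s
    have h1 : HasDerivAt (fun t => (deriv γ t 0)^2 + (deriv γ t 1)^2)
        (2 * deriv γ s 0 * iteratedDeriv 2 γ s 0 + 2 * deriv γ s 1 * iteratedDeriv 2 γ s 1) s := by
      have := ((hF1 0 s).fun_pow 2).fun_add ((hF1 1 s).fun_pow 2)
      exact this.congr_deriv (by ring)
    have h2 : HasDerivAt (fun t => (deriv γ t 0)^2 + (deriv γ t 1)^2) 0 s := by
      have he : (fun t => (deriv γ t 0)^2 + (deriv γ t 1)^2) = fun _ => (1:ℝ) := funext hr1
      rw [he]; exact hasDerivAt_const s 1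
    have := h1.unique h2
    linarith
  -- derivative of orthogonality
  have hr3 : ∀ s, iteratedDeriv 2 γ s 0 ^ 2 + deriv γ s 0 * iteratedDeriv 3 γ s 0
      + iteratedDeriv 2 γ s 1 ^ 2 + deriv γ s 1 * iteratedDeriv 3 γ s 1 = 0 := by
    intro s
    have h1 : HasDerivAt (fun t => deriv γ t 0 * iteratedDeriv 2 γ t 0 + deriv γ t 1 * iteratedDeriv 2 γ t 1)
        (iteratedDeriv 2 γ s 0 ^ 2 + deriv γ s 0 * iteratedDeriv 3 γ s 0
          + iteratedDeriv 2 γ s 1 ^ 2 + deriv γ s 1 * iteratedDeriv 3 γ s 1) s := by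
      have := ((hF1 0 s).fun_mul (hF 2 0 s)).fun_add ((hF1 1 s).fun_mul (hF 2 1 s))
      exact this.congr_deriv (by ring)
    have h2 : HasDerivAt (fun t => deriv γ t 0 * iteratedDeriv 2 γ t 0 + deriv γ t 1 * iteratedDeriv 2 γ t 1) 0 s := by
      have he : (fun t => deriv γ t 0 * iteratedDeriv 2 γ t 0 + deriv γ t 1 * iteratedDeriv 2 γ t 1)
          = fun _ => (0:ℝ) := funext hr2
      rw [he]; exact hasDerivAt_const s 0
    exact h1.unique h2
  -- first derivative of k
  have hdk : ∀ s, HasDerivAt k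
      (-(iteratedDeriv 3 γ s 0) * deriv γ s 1 + iteratedDeriv 3 γ s 1 * deriv γ s 0) s := by
    intro s
    have hkfun : k = fun t => -(iteratedDeriv 2 γ t 0) * (deriv γ t 1)
        + (iteratedDeriv 2 γ t 1) * (deriv γ t 0) := funext hk4
    rw [hkfun]
    have := (((hF 2 0 s).fun_neg.fun_mul (hF1 1 s)).fun_add ((hF 2 1 s).fun_mul (hF1 0 s)))
    exact this.congr_deriv (by ring)
  have hdk' : deriv k = fun s =>
      -(iteratedDeriv 3 γ s 0) * deriv γ s 1 + iteratedDeriv 3 γ s 1 * deriv γ s 0 :=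
    funext fun s => (hdk s).deriv
  -- second derivative of k
  have hddk : ∀ s, deriv (deriv k) s =
      -(iteratedDeriv 4 γ s 0) * deriv γ s 1 - iteratedDeriv 3 γ s 0 * iteratedDeriv 2 γ s 1
      + iteratedDeriv 4 γ s 1 * deriv γ s 0 + iteratedDeriv 3 γ s 1 * iteratedDeriv 2 γ s 0 := by
    intro s
    rw [hdk', (((hF 3 0 s).fun_neg.fun_mul (hF1 1 s)).fun_add ((hF 3 1 s).fun_mul (hF1 0 s))).deriv]
    ring
  -- key pointwise identity
  have key : ∀ s, ⟪-(iteratedDeriv 4 γ s) + lam • iteratedDeriv 2 γ s, nvec s⟫_ℝ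
      = -(deriv (deriv k) s - (k s) ^ 3 - lam * k s) := by
    intro s
    set x1 := deriv γ s 0; set y1 := deriv γ s 1
    set x2 := iteratedDeriv 2 γ s 0; set y2 := iteratedDeriv 2 γ s 1
    set x3 := iteratedDeriv 3 γ s 0; set y3 := iteratedDeriv 3 γ s 1
    have hx2 : x2 = -(k s * y1) := by
      linear_combination y1 * (hk4 s) - x2 * (hr1 s) + x1 * (hr2 s)
    have hy2 : y2 = k s * x1 := by
      linear_combination (-x1) * (hk4 s) - y2 * (hr1 s) + y1 * (hr2 s)
    have hc : x1 * x3 + y1 * y3 = -(k s)^2 := by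
      linear_combination (hr3 s) - (x2 - k s * y1) * hx2 - (y2 + k s * x1) * hy2 - (k s)^2 * (hr1 s)
    simp [PiLp.inner_apply, Fin.sum_univ_two, hnvec s]
    linear_combination (hddk s) - lam * (hk4 s) + y3 * hx2 - x3 * hy2 - (k s) * hc
  constructor
  · intro h s
    have := key s
    rw [h s] at this
    linarith
  · intro h s
    rw [key s, h s]
    ring
end

section
/- Let λ ∈ ℝ and let γ : ℝ → ℝ³ be a smooth curve parametrized by arc length. Suppose T, Nv, B : ℝ → ℝ³ are smooth maps and k₁, k₂ : ℝ → ℝ are smooth functions with k₁(s) > 0, such that for every s the triple (T(s), Nv(s), B(s)) is orthonormal, T = γ', and the Frenet equations hold: T' = k₁·Nv, Nv' = −k₁·T + k₂·B, B' = −k₂·Nv. Then γ is λ-biminimal, i.e., for every s and every v ∈ ℝ³ with ⟨v, γ'(s)⟩ = 0 one has ⟨−γ⁗(s) + λ·γ''(s), v⟩ = 0, if and only if k₁'' − k₁³ − k₁k₂² − λk₁ = 0 on ℝ and k₁²k₂ is a constant function. -/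
open scoped InnerProductSpace

/-- Frenet characterization of `λ`-biminimal curves in `ℝ³`: a smooth
unit-speed curve `γ` with orthonormal Frenet frame `(T, Nv, B)` and curvatures
`k₁ > 0`, `k₂` satisfying `T = γ'`, `T' = k₁Nv`, `Nv' = −k₁T + k₂B`,
`B' = −k₂Nv` is `λ`-biminimal iff `k₁'' − k₁³ − k₁k₂² − λk₁ = 0` and `k₁²k₂`
is constant. -/
theorem space_curve_biminimal_iff_frenet_system
    (lam : ℝ) (γ : ℝ → EuclideanSpace ℝ (Fin 3)) (hγ : ContDiff ℝ (⊤ : ℕ∞) γ)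
    (T Nv B : ℝ → EuclideanSpace ℝ (Fin 3))
    (hT : ContDiff ℝ (⊤ : ℕ∞) T) (hNv : ContDiff ℝ (⊤ : ℕ∞) Nv) (hB : ContDiff ℝ (⊤ : ℕ∞) B)
    (k₁ k₂ : ℝ → ℝ) (hk₁ : ContDiff ℝ (⊤ : ℕ∞) k₁) (hk₂ : ContDiff ℝ (⊤ : ℕ∞) k₂)
    (hk₁pos : ∀ s, 0 < k₁ s)
    (horthonormal : ∀ s, ‖T s‖ = 1 ∧ ‖Nv s‖ = 1 ∧ ‖B s‖ = 1 ∧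
      ⟪T s, Nv s⟫_ℝ = 0 ∧ ⟪T s, B s⟫_ℝ = 0 ∧ ⟪Nv s, B s⟫_ℝ = 0)
    (hTγ : ∀ s, T s = deriv γ s)
    (hfrenet1 : ∀ s, deriv T s = k₁ s • Nv s)
    (hfrenet2 : ∀ s, deriv Nv s = -(k₁ s) • T s + k₂ s • B s)
    (hfrenet3 : ∀ s, deriv B s = -(k₂ s) • Nv s) :
    (∀ s, ∀ v : EuclideanSpace ℝ (Fin 3), ⟪v, deriv γ s⟫_ℝ = 0 →
        ⟪-(iteratedDeriv 4 γ s) + lam • iteratedDeriv 2 γ s, v⟫_ℝ = 0)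
      ↔ ((∀ s, deriv (deriv k₁) s - (k₁ s) ^ 3 - k₁ s * (k₂ s) ^ 2
            - lam * k₁ s = 0)
          ∧ ∃ c : ℝ, ∀ s, (k₁ s) ^ 2 * k₂ s = c) := by

  have hdk₁ : Differentiable ℝ k₁ := hk₁.differentiable (by simp)
  have hdk₂ : Differentiable ℝ k₂ := hk₂.differentiable (by simp)
  have hdT : Differentiable ℝ T := hT.differentiable (by simp)
  have hdNv : Differentiable ℝ Nv := hNv.differentiable (by simp)
  have hdB : Differentiable ℝ B := hB.differentiable (by simp)
  have hdk₁' : Differentiable ℝ (deriv k₁) :=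
    ((contDiff_infty_iff_deriv.mp (hk₁.of_le (by simp))).2).differentiable (by simp)
  -- inner product facts
  have hNN : ∀ s, ⟪Nv s, Nv s⟫_ℝ = 1 := fun s => by
    rw [real_inner_self_eq_norm_mul_norm, (horthonormal s).2.1]; norm_num
  have hBB : ∀ s, ⟪B s, B s⟫_ℝ = 1 := fun s => by
    rw [real_inner_self_eq_norm_mul_norm, (horthonormal s).2.2.1]; norm_num
  have hTN : ∀ s, ⟪T s, Nv s⟫_ℝ = 0 := fun s => (horthonormal s).2.2.2.1
  have hTB : ∀ s, ⟪T s, B s⟫_ℝ = 0 := fun s => (horthonormal s).2.2.2.2.1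
  have hNB : ∀ s, ⟪Nv s, B s⟫_ℝ = 0 := fun s => (horthonormal s).2.2.2.2.2
  have hNT : ∀ s, ⟪Nv s, T s⟫_ℝ = 0 := fun s => by
    rw [real_inner_comm]; exact hTN s
  have hBT : ∀ s, ⟪B s, T s⟫_ℝ = 0 := fun s => by
    rw [real_inner_comm]; exact hTB s
  have hBN : ∀ s, ⟪B s, Nv s⟫_ℝ = 0 := fun s => by
    rw [real_inner_comm]; exact hNB s
  have hγ' : deriv γ = T := funext fun s => (hTγ s).symm
  have e2 : iteratedDeriv 2 γ = deriv (iteratedDeriv 1 γ) := iteratedDeriv_succ (n := 1)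
  have e3 : iteratedDeriv 3 γ = deriv (iteratedDeriv 2 γ) := iteratedDeriv_succ (n := 2)
  have e4 : iteratedDeriv 4 γ = deriv (iteratedDeriv 3 γ) := iteratedDeriv_succ (n := 3)
  have h2fun : iteratedDeriv 2 γ = fun s => k₁ s • Nv s := by
    rw [e2, iteratedDeriv_one, hγ']
    exact funext hfrenet1
  have h2 : ∀ s, iteratedDeriv 2 γ s = k₁ s • Nv s := fun s => by rw [h2fun]
  have h3fun : iteratedDeriv 3 γ
      = fun s => (-(k₁ s * k₁ s)) • T s + deriv k₁ s • Nv s + (k₁ s * k₂ s) • B s := by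
    rw [e3, h2fun]
    funext s
    rw [(show HasDerivAt (fun s => k₁ s • Nv s) _ s from (hdk₁ s).hasDerivAt.smul (hdNv s).hasDerivAt).deriv, hfrenet2 s]
    module
  have h4 : ∀ s, iteratedDeriv 4 γ s
      = (-(3*(k₁ s * deriv k₁ s))) • T s
        + (deriv (deriv k₁) s - (k₁ s)^3 - k₁ s * (k₂ s)^2) • Nv s
        + (2*(deriv k₁ s * k₂ s) + k₁ s * deriv k₂ s) • B s := by
    intro s
    rw [e4, h3fun]
    have hA : HasDerivAt (fun u => -(k₁ u * k₁ u))
        (-(deriv k₁ s * k₁ s + k₁ s * deriv k₁ s)) s :=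
      ((hdk₁ s).hasDerivAt.mul (hdk₁ s).hasDerivAt).neg
    have htot := ((hA.smul (hdT s).hasDerivAt).add
        (((hdk₁' s).hasDerivAt).smul (hdNv s).hasDerivAt)).add
        (((hdk₁ s).hasDerivAt.mul (hdk₂ s).hasDerivAt).smul (hdB s).hasDerivAt)
    rw [(show HasDerivAt (fun s => (-(k₁ s * k₁ s)) • T s + deriv k₁ s • Nv s + (k₁ s * k₂ s) • B s) _ s from htot).deriv, hfrenet1 s, hfrenet2 s, hfrenet3 s, Pi.mul_apply]
    module
  have hvec : ∀ s, -(iteratedDeriv 4 γ s) + lam • iteratedDeriv 2 γ s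
      = (3*(k₁ s * deriv k₁ s)) • T s
        + (-(deriv (deriv k₁) s - (k₁ s)^3 - k₁ s * (k₂ s)^2 - lam * k₁ s)) • Nv s
        + (-(2*(deriv k₁ s * k₂ s) + k₁ s * deriv k₂ s)) • B s := by
    intro s
    rw [h4 s, h2 s]
    module
  have hgderiv : ∀ x, HasDerivAt (fun u => (k₁ u)^2 * k₂ u)
      (k₁ x * (2*(deriv k₁ x * k₂ x) + k₁ x * deriv k₂ x)) x := by
    intro x
    have h : HasDerivAt (fun u => (k₁ u)^2 * k₂ u) _ x := ((hdk₁ x).hasDerivAt.pow 2).mul (hdk₂ x).hasDerivAt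
    convert h using 1
    rw [Pi.pow_apply]; ring
  constructor
  · intro hbi
    have hNvcond : ∀ s, deriv (deriv k₁) s - (k₁ s)^3 - k₁ s * (k₂ s)^2
        - lam * k₁ s = 0 := by
      intro s
      have hv := hbi s (Nv s) (by rw [hγ']; exact hNT s)
      rw [hvec s, inner_add_left, inner_add_left, real_inner_smul_left,
        real_inner_smul_left, real_inner_smul_left, hTN s, hNN s, hBN s] at hv
      linarith
    have hBcond : ∀ s, 2*(deriv k₁ s * k₂ s) + k₁ s * deriv k₂ s = 0 := by
      intro s
      have hv := hbi s (B s) (by rw [hγ']; exact hBT s)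
      rw [hvec s, inner_add_left, inner_add_left, real_inner_smul_left,
        real_inner_smul_left, real_inner_smul_left, hTB s, hNB s, hBB s] at hv
      linarith
    refine ⟨hNvcond, (k₁ 0)^2 * k₂ 0, fun s => ?_⟩
    have hgd : ∀ x, deriv (fun u => (k₁ u)^2 * k₂ u) x = 0 := by
      intro x
      rw [(hgderiv x).deriv, hBcond x, mul_zero]
    exact is_const_of_deriv_eq_zero ((hdk₁.pow 2).mul hdk₂) hgd s 0
  · rintro ⟨hE, c, hc⟩ s v hv
    have hg0 : deriv (fun u => (k₁ u)^2 * k₂ u) s = 0 := by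
      rw [show (fun u => (k₁ u)^2 * k₂ u) = fun _ => c from funext hc, deriv_const']
    rw [(hgderiv s).deriv] at hg0
    have hBcond : 2*(deriv k₁ s * k₂ s) + k₁ s * deriv k₂ s = 0 := by
      rcases mul_eq_zero.mp hg0 with h | h
      · exact absurd h (ne_of_gt (hk₁pos s))
      · exact h
    have hTv : ⟪T s, v⟫_ℝ = 0 := by
      rw [hγ'] at hv
      rw [real_inner_comm]; exact hv
    rw [hvec s, inner_add_left, inner_add_left, real_inner_smul_left,
      real_inner_smul_left, real_inner_smul_left, hTv, hE s, hBcond]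
    ring
end

section
/- Let λ < 0, set ω = √(−λ), let N ≥ 2, and let c₁, c₂, c₃ ∈ ℝᴺ with ‖c₁‖ = ‖c₂‖ = 1 and ⟨c₁, c₂⟩ = 0. Define γ : ℝ → ℝᴺ by γ(s) = (1/ω)·(cos(ωs)·c₁ + sin(ωs)·c₂) + c₃. Then: (i) ‖γ'(s)‖ = 1 for all s (γ is parametrized by arc length); (ii) γ⁗(s) = λ·γ''(s) for all s, so in particular γ is λ-biminimal (the component of −γ⁗ + λγ'' orthogonal to γ' vanishes); and (iii) γ''(s) ≠ 0 for all s, so γ is non-minimal (non-trivial). -/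
open scoped InnerProductSpace

/-! Write `γ = ω⁻¹ • u + c₃` with `u s = cos (ω s) • c₁ + sin (ω s) • c₂`. Differentiating `u`
replaces the pair `(c₁, c₂)` by `(ω c₂, -ω c₁)`, so `u'' = -ω² u = λ u`, which gives `γ⁗ = λ γ''`;
orthonormality of `c₁, c₂` gives `‖γ'‖ = 1` and `‖γ''‖ = ω ≠ 0`. -/

noncomputable def cosSinCurve {E : Type*} [AddCommGroup E] [Module ℝ E] (ω : ℝ) (a b : E)
    (s : ℝ) : E :=
  Real.cos (ω * s) • a + Real.sin (ω * s) • b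

theorem smul_cosSinCurve {E : Type*} [AddCommGroup E] [Module ℝ E] (k ω : ℝ) (a b : E) :
    k • cosSinCurve ω a b = cosSinCurve ω (k • a) (k • b) := by
  funext s
  simp only [cosSinCurve, Pi.smul_apply]
  module

section Derivatives

variable {E : Type*} [NormedAddCommGroup E] [NormedSpace ℝ E]

theorem hasDerivAt_cosSinCurve (ω : ℝ) (a b : E) (s : ℝ) :
    HasDerivAt (cosSinCurve ω a b) (cosSinCurve ω (ω • b) (-(ω • a)) s) s := by
  have hθ : HasDerivAt (fun t => ω * t) ω s := by simpa using (hasDerivAt_id s).const_mul ω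
  have h := (((Real.hasDerivAt_cos _).comp s hθ).smul_const a).add
    (((Real.hasDerivAt_sin _).comp s hθ).smul_const b)
  refine h.congr_deriv ?_
  simp only [cosSinCurve]
  module

theorem deriv_cosSinCurve (ω : ℝ) (a b : E) :
    deriv (cosSinCurve ω a b) = cosSinCurve ω (ω • b) (-(ω • a)) :=
  funext fun s => (hasDerivAt_cosSinCurve ω a b s).deriv

theorem deriv_deriv_cosSinCurve (ω : ℝ) (a b : E) :
    deriv (deriv (cosSinCurve ω a b)) = (-ω ^ 2) • cosSinCurve ω a b := by
  funext s
  simp only [deriv_cosSinCurve, cosSinCurve, Pi.smul_apply]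
  module

theorem iteratedDeriv_add_two_cosSinCurve (n : ℕ) (ω : ℝ) (a b : E) :
    iteratedDeriv (n + 2) (cosSinCurve ω a b) =
      (-ω ^ 2) • iteratedDeriv n (cosSinCurve ω a b) := by
  funext s
  rw [iteratedDeriv_succ', iteratedDeriv_succ', deriv_deriv_cosSinCurve, Pi.smul_apply,
    iteratedDeriv_const_smul_field]

theorem deriv_inv_smul_cosSinCurve_add_const {ω : ℝ} (hω : ω ≠ 0) (a b c : E) :
    deriv (fun s => (1 / ω) • cosSinCurve ω a b s + c) = cosSinCurve ω b (-a) := by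
  rw [deriv_add_const', ← Pi.smul_def, smul_cosSinCurve, deriv_cosSinCurve]
  simp only [smul_smul, mul_one_div_cancel hω, one_smul]

end Derivatives

theorem norm_cosSinCurve {E : Type*} [NormedAddCommGroup E] [InnerProductSpace ℝ E]
    {a b : E} (ha : ‖a‖ = 1) (hb : ‖b‖ = 1) (hab : ⟪a, b⟫_ℝ = 0) (ω s : ℝ) :
    ‖cosSinCurve ω a b s‖ = 1 := by
  have hsq : ‖cosSinCurve ω a b s‖ ^ 2 = 1 := by
    rw [cosSinCurve, norm_add_sq_real, norm_smul, norm_smul, real_inner_smul_left,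
      real_inner_smul_right, hab, ha, hb]
    simp only [Real.norm_eq_abs, mul_pow, sq_abs]
    linear_combination Real.cos_sq_add_sin_sq (ω * s)
  exact (pow_eq_one_iff_of_nonneg (norm_nonneg _) two_ne_zero).1 hsq

theorem circle_is_nontrivial_biminimal_general
    (lam : ℝ) (hlam : lam < 0) (ω : ℝ) (hω : ω = Real.sqrt (-lam))
    {N : ℕ} (c₁ c₂ c₃ : EuclideanSpace ℝ (Fin N))
    (hc₁ : ‖c₁‖ = 1) (hc₂ : ‖c₂‖ = 1) (hc₁c₂ : ⟪c₁, c₂⟫_ℝ = 0)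
    (γ : ℝ → EuclideanSpace ℝ (Fin N))
    (hγ : ∀ s, γ s = (1 / ω) • (Real.cos (ω * s) • c₁
      + Real.sin (ω * s) • c₂) + c₃) :
    (∀ s, ‖deriv γ s‖ = 1) ∧
    (∀ s, iteratedDeriv 4 γ s = lam • iteratedDeriv 2 γ s) ∧
    (∀ s, ∀ v : EuclideanSpace ℝ (Fin N), ⟪v, deriv γ s⟫_ℝ = 0 →
      ⟪-(iteratedDeriv 4 γ s) + lam • iteratedDeriv 2 γ s, v⟫_ℝ = 0) ∧
    (∀ s, iteratedDeriv 2 γ s ≠ 0) := by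
  have hω0 : 0 < ω := hω ▸ Real.sqrt_pos.2 (neg_pos.2 hlam)
  have hω2 : -ω ^ 2 = lam := by rw [hω, Real.sq_sqrt (neg_nonneg.2 hlam.le), neg_neg]
  have hT : deriv γ = cosSinCurve ω c₂ (-c₁) := by
    rw [show γ = fun s => (1 / ω) • cosSinCurve ω c₁ c₂ s + c₃ from funext hγ]
    exact deriv_inv_smul_cosSinCurve_add_const hω0.ne' c₁ c₂ c₃
  have hT_norm : ∀ s, ‖cosSinCurve ω c₂ (-c₁) s‖ = 1 :=
    norm_cosSinCurve hc₂ (by rwa [norm_neg])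
      (by rw [inner_neg_right, real_inner_comm, hc₁c₂, neg_zero]) ω
  have hγ'' : iteratedDeriv 2 γ = (-ω) • cosSinCurve ω c₁ c₂ := by
    rw [iteratedDeriv_succ', hT, iteratedDeriv_one, deriv_cosSinCurve, smul_cosSinCurve,
      smul_neg, neg_smul, neg_smul]
  have hbi : ∀ s, iteratedDeriv 4 γ s = lam • iteratedDeriv 2 γ s := by
    intro s
    rw [iteratedDeriv_succ', hT, iteratedDeriv_add_two_cosSinCurve, hω2, ← hT,
      ← iteratedDeriv_succ']
    rfl
  refine ⟨fun s => hT ▸ hT_norm s, hbi, fun s v _ => by simp [hbi s], fun s => ?_⟩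
  rw [hγ'', Pi.smul_apply]
  refine smul_ne_zero (neg_ne_zero.2 hω0.ne') (norm_ne_zero_iff.1 ?_)
  rw [norm_cosSinCurve hc₁ hc₂ hc₁c₂]
  exact one_ne_zero

/-- Example 4.7: for `λ < 0`, `ω = √(−λ)`, and orthonormal constant vectors
`c₁, c₂ ∈ ℝᴺ`, the circle `γ(s) = (1/ω)(cos(ωs)c₁ + sin(ωs)c₂) + c₃` is a
unit-speed, non-trivial `λ`-biminimal curve: `‖γ'‖ = 1`, `γ⁗ = λγ''` (hence
the normal component of `−γ⁗ + λγ''` vanishes), and `γ'' ≠ 0` everywhere. -/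
theorem circle_is_nontrivial_biminimal
    (lam : ℝ) (hlam : lam < 0) (ω : ℝ) (hω : ω = Real.sqrt (-lam))
    {N : ℕ} (hN : 2 ≤ N) (c₁ c₂ c₃ : EuclideanSpace ℝ (Fin N))
    (hc₁ : ‖c₁‖ = 1) (hc₂ : ‖c₂‖ = 1) (hc₁c₂ : ⟪c₁, c₂⟫_ℝ = 0)
    (γ : ℝ → EuclideanSpace ℝ (Fin N))
    (hγ : ∀ s, γ s = (1 / ω) • (Real.cos (ω * s) • c₁
      + Real.sin (ω * s) • c₂) + c₃) :
    (∀ s, ‖deriv γ s‖ = 1) ∧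
    (∀ s, iteratedDeriv 4 γ s = lam • iteratedDeriv 2 γ s) ∧
    (∀ s, ∀ v : EuclideanSpace ℝ (Fin N), ⟪v, deriv γ s⟫_ℝ = 0 →
      ⟪-(iteratedDeriv 4 γ s) + lam • iteratedDeriv 2 γ s, v⟫_ℝ = 0) ∧
    (∀ s, iteratedDeriv 2 γ s ≠ 0) :=
  circle_is_nontrivial_biminimal_general lam hlam ω hω c₁ c₂ c₃ hc₁ hc₂ hc₁c₂ γ hγ
end
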